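/- For every r ∈ (0,1) and every ρ > 0, there exists a constant C ≥ 0 such that 0 ≤ H_{r,ρ}(x) ≤ C · exp(−ρ x²/2) for all x ≥ 0. Consequently, for every ε with 0 < ε < ρ/2, ∫_0^∞ exp(ε x²) · H_{r,ρ}(x) dx < ∞, i.e. a random variable with density H_{r,ρ} has a finite Gaussian exponential moment of order ε. -/

import Mathlib

noncomputable def psi (r : ℝ) : ℝ :=
  Real.sqrt (2 / Real.pi) * ∏' n : ℕ, (1 - r ^ (2 * n + 2)) / (1 - r ^ (2 * n + 1))

noncomputable def H (r ρ x : ℝ) : ℝ :=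
  (Real.sqrt (2 * ρ / Real.pi) / ∏' n : ℕ, (1 - r ^ (2 * n + 1))) *
    ∑' n : ℕ,
      (r ^ (-(2 * (n : ℤ))) / ∏ k ∈ Finset.Icc 1 n, (1 - r ^ (-(2 * (k : ℤ))))) *
        Real.exp (-ρ * r ^ (-(2 * (n : ℤ))) * x ^ 2 / 2)

/-!
Put `q = r²`. Up to a nonnegative factor, `H r ρ x = S (ρ x² / 2)` with
`S y = ∑ dₙ exp (-q⁻ⁿ y)`. By the partial-fraction formula for the density of a sum of independent
exponential variables with the distinct rates `1, q⁻¹, …, q⁻ᴺ`, that density is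
`∑_{n ≤ N} dₙ / (q; q)_{N-n} · exp (-q⁻ⁿ y) ≥ 0`. As `N → ∞` the `q`-Pochhammer symbols decrease
to a positive limit `(q; q)_∞`, so by dominated convergence the densities tend to `S y / (q; q)_∞`,
and `S ≥ 0`. Since `q⁻ⁿ ≥ 1` and `∑ |dₙ| < ∞` (ratio test), `S y ≤ (∑ |dₙ|) e^{-y}`, which is the
Gaussian bound; integrability against `exp (ε x²)` follows by comparison with `exp (-(ρ/2 - ε) x²)`.
-/

open Finset Filter Real Topology

/-- Compare the coefficients of `X ^ (#s - 1)` in the Lagrange interpolation of the constant `1`. -/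
theorem sum_inv_prod_sub_eq_zero {ι F : Type*} [Field F] [DecidableEq ι] {s : Finset ι}
    {v : ι → F} (hv : Set.InjOn v s) (hs : 2 ≤ #s) :
    ∑ i ∈ s, (∏ j ∈ s.erase i, (v i - v j))⁻¹ = 0 := by
  have h := Lagrange.coeff_eq_sum hv (P := 1)
    (by rw [Polynomial.degree_one]; exact_mod_cast (by omega : 0 < #s))
  rw [Polynomial.coeff_one, if_neg (by omega)] at h
  simpa [one_div] using h.symm

theorem integral_exp_mul_of_ne {c : ℝ} (hc : c ≠ 0) (y : ℝ) :
    ∫ s in (0 : ℝ)..y, exp (c * s) = (exp (c * y) - 1) / c := by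
  rw [intervalIntegral.integral_comp_mul_left exp hc, integral_exp, mul_zero, exp_zero,
    smul_eq_mul]
  field_simp

section Hypoexponential

variable (a : ℕ → ℝ)

/-- The density of `E₀ + ⋯ + E_N` for independent `E_k ~ Exp (a k)`, as iterated convolutions. -/
noncomputable def hypoexpDensity : ℕ → ℝ → ℝ
  | 0, y => a 0 * exp (-(a 0 * y))
  | N + 1, y => a (N + 1) * exp (-(a (N + 1) * y)) *
      ∫ s in (0 : ℝ)..y, exp (a (N + 1) * s) * hypoexpDensity N s

noncomputable def hypoexpWeight (N n : ℕ) : ℝ :=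
  ∏ k ∈ (range (N + 1)).erase n, a k / (a k - a n)

variable {a}

theorem hypoexpDensity_nonneg (ha : ∀ n, 0 ≤ a n) (N : ℕ) {y : ℝ} (hy : 0 ≤ y) :
    0 ≤ hypoexpDensity a N y := by
  induction N generalizing y with
  | zero => exact mul_nonneg (ha 0) (exp_pos _).le
  | succ N ih =>
    refine mul_nonneg (mul_nonneg (ha _) (exp_pos _).le) ?_
    exact intervalIntegral.integral_nonneg hy fun s hs => mul_nonneg (exp_pos _).le (ih hs.1)

theorem hypoexpWeight_succ {N n : ℕ} (hn : n ≤ N) :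
    hypoexpWeight a (N + 1) n = hypoexpWeight a N n * (a (N + 1) / (a (N + 1) - a n)) := by
  rw [hypoexpWeight, range_add_one, erase_insert_of_ne (by omega), prod_insert (by simp),
    mul_comm, hypoexpWeight]

theorem sum_hypoexpWeight_mul_eq_zero (ha : Function.Injective a) {N : ℕ} (hN : 1 ≤ N) :
    ∑ n ∈ range (N + 1), hypoexpWeight a N n * a n = 0 := by
  have hterm : ∀ n ∈ range (N + 1), hypoexpWeight a N n * a n =
      (∏ k ∈ range (N + 1), a k) * (∏ k ∈ (range (N + 1)).erase n, ((-a) n - (-a) k))⁻¹ := by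
    intro n hn
    simp only [hypoexpWeight, div_eq_mul_inv, prod_mul_distrib, Pi.neg_apply, neg_sub_neg,
      prod_inv_distrib, ← mul_prod_erase _ a hn]
    ring
  rw [sum_congr rfl hterm, ← mul_sum, mul_eq_zero_of_right]
  exact sum_inv_prod_sub_eq_zero (v := -a) (fun i _ j _ h => ha (neg_inj.1 h)) (by simp; omega)

theorem hypoexpDensity_eq_sum (ha : StrictMono a) (N : ℕ) (y : ℝ) :
    hypoexpDensity a N y =
      ∑ n ∈ range (N + 1), hypoexpWeight a N n * a n * exp (-(a n * y)) := by
  induction N generalizing y with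
  | zero => simp [hypoexpDensity, hypoexpWeight]
  | succ N ih =>
    have hne : ∀ n ∈ range (N + 1), a (N + 1) - a n ≠ 0 := fun n hn =>
      sub_ne_zero.2 (ha (by simpa using hn)).ne'
    have hint : ∫ s in (0 : ℝ)..y, exp (a (N + 1) * s) * hypoexpDensity a N s =
        ∑ n ∈ range (N + 1), hypoexpWeight a N n * a n *
          ((exp ((a (N + 1) - a n) * y) - 1) / (a (N + 1) - a n)) := by
      simp_rw [ih, mul_sum]
      rw [intervalIntegral.integral_finsetSum fun n _ =>
        (by fun_prop : Continuous _).intervalIntegrable _ _]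
      refine sum_congr rfl fun n hn => ?_
      have hexp : ∀ s, exp (a (N + 1) * s) * (hypoexpWeight a N n * a n * exp (-(a n * s))) =
          hypoexpWeight a N n * a n * exp ((a (N + 1) - a n) * s) := fun s => by
        rw [mul_left_comm, ← exp_add]; congr 2; ring
      simp_rw [hexp]
      rw [intervalIntegral.integral_const_mul, integral_exp_mul_of_ne (hne n hn)]
    have hlast : hypoexpWeight a (N + 1) (N + 1) * a (N + 1) =
        -∑ n ∈ range (N + 1), hypoexpWeight a (N + 1) n * a n := by
      have := sum_hypoexpWeight_mul_eq_zero ha.injective (N := N + 1) (by omega)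
      rw [sum_range_succ] at this
      linarith
    rw [hypoexpDensity, hint, sum_range_succ _ (N + 1), hlast, mul_sum, neg_mul, sum_mul,
      ← sub_eq_add_neg, ← sum_sub_distrib]
    refine sum_congr rfl fun n hn => ?_
    rw [hypoexpWeight_succ (by simpa [Nat.lt_succ_iff] using hn)]
    have hexp : exp (-(a (N + 1) * y)) * exp ((a (N + 1) - a n) * y) = exp (-(a n * y)) := by
      rw [← exp_add]; ring_nf
    -- opaque exponentials, so that `field_simp` does not rewrite their arguments
    set E := exp ((a (N + 1) - a n) * y)
    set E' := exp (-(a n * y))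
    field_simp [hne n hn]
    linear_combination (hypoexpWeight a N n * a n * a (N + 1)) * hexp

end Hypoexponential

section GeometricRates

noncomputable def qRate (q : ℝ) (n : ℕ) : ℝ := (q ^ n)⁻¹

/-- The `q`-Pochhammer symbol `(q; q)_m`. -/
noncomputable def qPochhammer (q : ℝ) (m : ℕ) : ℝ := ∏ j ∈ range m, (1 - q ^ (j + 1))

noncomputable def hCoeff (q : ℝ) (n : ℕ) : ℝ := qRate q n / ∏ k ∈ Icc 1 n, (1 - qRate q k)

variable {q : ℝ}

theorem qRate_pos (hq : 0 < q) (n : ℕ) : 0 < qRate q n := by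
  unfold qRate; positivity

theorem qRate_add (q : ℝ) (m n : ℕ) : qRate q (m + n) = qRate q m * qRate q n := by
  simp only [qRate, pow_add, mul_inv]

theorem strictMono_qRate (hq0 : 0 < q) (hq1 : q < 1) : StrictMono (qRate q) := fun _ _ h =>
  inv_strictAnti₀ (pow_pos hq0 _) (pow_lt_pow_right_of_lt_one₀ hq0 hq1 h)

theorem one_le_qRate (hq0 : 0 < q) (hq1 : q ≤ 1) (n : ℕ) : 1 ≤ qRate q n :=
  (one_le_inv₀ (pow_pos hq0 n)).2 (pow_le_one₀ hq0.le hq1)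

theorem one_lt_qRate (hq0 : 0 < q) (hq1 : q < 1) {n : ℕ} (hn : n ≠ 0) : 1 < qRate q n :=
  (one_lt_inv₀ (pow_pos hq0 n)).2 (pow_lt_one₀ hq0.le hq1 hn)

theorem hypoexpWeight_qRate_self (hq0 : 0 < q) (hq1 : q < 1) (n : ℕ) :
    hypoexpWeight (qRate q) n n = (∏ k ∈ Icc 1 n, (1 - qRate q k))⁻¹ := by
  rw [hypoexpWeight, range_add_one, erase_insert notMem_range_self, ← prod_inv_distrib]
  refine prod_nbij' (fun k => n - k) (fun j => n - j) (by simp; omega) (by simp; omega)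
    (by simp; omega) (by simp; omega) fun k hk => ?_
  obtain ⟨m, rfl⟩ := Nat.exists_eq_add_of_lt (mem_range.1 hk)
  rw [show k + m + 1 - k = m + 1 by omega, add_assoc, qRate_add]
  have := one_lt_qRate hq0 hq1 m.succ_ne_zero
  field_simp [(qRate_pos hq0 k).ne', (sub_pos.2 this).ne']

theorem qPochhammer_succ (q : ℝ) (m : ℕ) :
    qPochhammer q (m + 1) = qPochhammer q m * (1 - q ^ (m + 1)) :=
  prod_range_succ _ m

theorem hypoexpWeight_qRate_mul (hq0 : 0 < q) (hq1 : q < 1) {n N : ℕ} (hn : n ≤ N) :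
    hypoexpWeight (qRate q) N n * qRate q n = hCoeff q n / qPochhammer q (N - n) := by
  induction N, hn using Nat.le_induction with
  | base =>
    rw [hypoexpWeight_qRate_self hq0 hq1, hCoeff, Nat.sub_self, qPochhammer, prod_range_zero]
    ring
  | succ N hn ih =>
    obtain ⟨m, rfl⟩ := Nat.exists_eq_add_of_le hn
    rw [hypoexpWeight_succ hn, mul_right_comm, ih, show n + m + 1 - n = m + 1 by omega,
      Nat.add_sub_cancel_left, qPochhammer_succ, add_assoc, qRate_add]
    have key : qRate q (m + 1) * (1 - q ^ (m + 1)) = qRate q (m + 1) - 1 := by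
      rw [qRate]; field_simp
    field_simp [(qRate_pos hq0 n).ne']
    rw [← key, mul_left_comm, mul_comm (hCoeff q n), mul_div_mul_left _ _ (qRate_pos hq0 _).ne']

theorem hCoeff_succ (hq0 : 0 < q) (hq1 : q < 1) (n : ℕ) :
    hCoeff q (n + 1) = -(q ^ n / (1 - q ^ (n + 1))) * hCoeff q n := by
  have hprod : ∏ k ∈ Icc 1 n, (1 - qRate q k) ≠ 0 := prod_ne_zero_iff.2 fun k hk =>
    (sub_neg.2 (one_lt_qRate hq0 hq1 (by simp at hk; omega))).ne
  have hq : q ^ (n + 1) < 1 := pow_lt_one₀ hq0.le hq1 n.succ_ne_zero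
  rw [hCoeff, hCoeff, prod_Icc_succ_top (by omega), qRate, qRate]
  field_simp [hprod, (sub_pos.2 hq).ne', hq0.ne']
  rw [div_eq_iff (sub_neg.2 hq).ne]
  ring

theorem summable_hCoeff (hq0 : 0 < q) (hq1 : q < 1) : Summable (hCoeff q) := by
  have hne : ∀ n, hCoeff q n ≠ 0 := by
    intro n
    induction n with
    | zero => simp [hCoeff, qRate]
    | succ n ih =>
      have hq : q ^ (n + 1) < 1 := pow_lt_one₀ hq0.le hq1 n.succ_ne_zero
      rw [hCoeff_succ hq0 hq1]
      exact mul_ne_zero (neg_ne_zero.2 (div_ne_zero (pow_pos hq0 n).ne' (sub_pos.2 hq).ne')) ih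
  refine summable_of_ratio_test_tendsto_lt_one zero_lt_one (.of_forall hne) ?_
  have hratio : ∀ n, ‖hCoeff q (n + 1)‖ / ‖hCoeff q n‖ = q ^ n / (1 - q ^ (n + 1)) := by
    intro n
    have hq : q ^ (n + 1) < 1 := pow_lt_one₀ hq0.le hq1 n.succ_ne_zero
    rw [hCoeff_succ hq0 hq1, norm_mul, norm_neg, mul_div_assoc,
      div_self (norm_ne_zero_iff.2 (hne n)), mul_one, Real.norm_of_nonneg (div_nonneg (pow_pos hq0 n).le (sub_pos.2 hq).le)]
  simp_rw [hratio]
  have h := tendsto_pow_atTop_nhds_zero_of_lt_one hq0.le hq1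
  have hden : Tendsto (fun n => 1 - q ^ (n + 1)) atTop (𝓝 (1 - 0)) :=
    tendsto_const_nhds.sub (h.comp (tendsto_add_atTop_nat 1))
  have := h.div hden (by norm_num)
  rwa [zero_div] at this

theorem qPochhammer_pos (hq0 : 0 < q) (hq1 : q < 1) (m : ℕ) : 0 < qPochhammer q m :=
  prod_pos fun j _ => sub_pos.2 (pow_lt_one₀ hq0.le hq1 j.succ_ne_zero)

theorem antitone_qPochhammer (hq0 : 0 < q) (hq1 : q < 1) : Antitone (qPochhammer q) :=
  antitone_nat_of_succ_le fun m => by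
    rw [qPochhammer_succ]
    exact mul_le_of_le_one_right (qPochhammer_pos hq0 hq1 m).le (by simp; positivity)

theorem exists_tendsto_qPochhammer (hq0 : 0 < q) (hq1 : q < 1) :
    ∃ L, 0 < L ∧ Tendsto (qPochhammer q) atTop (𝓝 L) := by
  have hsum : Summable fun j : ℕ => -q ^ (j + 1) := by
    simpa [pow_succ] using ((summable_geometric_of_lt_one hq0.le hq1).mul_right q).neg
  have hprod := Real.hasProd_of_hasSum_log
    (fun j => by simpa using (sub_pos.2 (pow_lt_one₀ hq0.le hq1 j.succ_ne_zero)))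
    (Real.summable_log_one_add_of_summable hsum).hasSum
  have := hprod.tendsto_prod_nat
  simp only [← sub_eq_add_neg] at this
  exact ⟨_, exp_pos _, this⟩

end GeometricRates

section Series

noncomputable def hSeries (q y : ℝ) : ℝ := ∑' n, hCoeff q n * exp (-(qRate q n * y))

variable {q : ℝ}

theorem norm_hCoeff_mul_exp_le (hq0 : 0 < q) (hq1 : q < 1) (n : ℕ) {y : ℝ} (hy : 0 ≤ y) :
    ‖hCoeff q n * exp (-(qRate q n * y))‖ ≤ |hCoeff q n| * exp (-y) := by
  rw [norm_mul, Real.norm_eq_abs, Real.norm_of_nonneg (exp_pos _).le]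
  gcongr
  nlinarith [one_le_qRate hq0 hq1.le n]

theorem tendsto_hypoexpDensity_qRate (hq0 : 0 < q) (hq1 : q < 1) {L : ℝ} (hL0 : 0 < L)
    (hL : Tendsto (qPochhammer q) atTop (𝓝 L)) {y : ℝ} (hy : 0 ≤ y) :
    Tendsto (fun N => hypoexpDensity (qRate q) N y) atTop (𝓝 (hSeries q y / L)) := by
  let F : ℕ → ℕ → ℝ := fun N n =>
    if n ≤ N then hCoeff q n / qPochhammer q (N - n) * exp (-(qRate q n * y)) else 0
  have hF_sum : ∀ N, ∑' n, F N n = hypoexpDensity (qRate q) N y := by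
    intro N
    rw [tsum_eq_sum (s := range (N + 1)) fun n hn => if_neg (by simpa [Nat.lt_succ_iff] using hn),
      hypoexpDensity_eq_sum (strictMono_qRate hq0 hq1)]
    refine sum_congr rfl fun n hn => ?_
    have hnN : n ≤ N := by simpa [Nat.lt_succ_iff] using hn
    rw [if_pos hnN, hypoexpWeight_qRate_mul hq0 hq1 hnN]
  have hF_lim : ∀ n, Tendsto (fun N => F N n) atTop
      (𝓝 (hCoeff q n / L * exp (-(qRate q n * y)))) := by
    intro n
    have h := ((tendsto_const_nhds (x := hCoeff q n)).div (hL.comp (tendsto_sub_atTop_nat n))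
      hL0.ne').mul (tendsto_const_nhds (x := exp (-(qRate q n * y))))
    exact h.congr' ((eventually_ge_atTop n).mono fun N hN => (if_pos hN).symm)
  have hF_le : ∀ N n, ‖F N n‖ ≤ |hCoeff q n| / L := by
    intro N n
    by_cases hnN : n ≤ N
    · have hP := (antitone_qPochhammer hq0 hq1).le_of_tendsto hL (N - n)
      simp only [F, if_pos hnN, norm_mul, norm_div, Real.norm_eq_abs,
        abs_of_pos (qPochhammer_pos hq0 hq1 _), abs_of_pos (exp_pos _)]
      calc |hCoeff q n| / qPochhammer q (N - n) * exp (-(qRate q n * y))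
          ≤ |hCoeff q n| / L * 1 := by
            gcongr
            exact exp_le_one_iff.2 (by nlinarith [qRate_pos hq0 n])
        _ = |hCoeff q n| / L := mul_one _
    · simp only [F, if_neg hnN, norm_zero]
      positivity
  have h := tendsto_tsum_of_dominated_convergence ((summable_hCoeff hq0 hq1).abs.div_const L)
    hF_lim (.of_forall hF_le)
  simp_rw [hF_sum, div_mul_eq_mul_div, tsum_div_const] at h
  exact h

theorem hSeries_nonneg (hq0 : 0 < q) (hq1 : q < 1) {y : ℝ} (hy : 0 ≤ y) : 0 ≤ hSeries q y := by
  obtain ⟨L, hL0, hL⟩ := exists_tendsto_qPochhammer hq0 hq1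
  have h := ge_of_tendsto' (tendsto_hypoexpDensity_qRate hq0 hq1 hL0 hL hy) fun N =>
    hypoexpDensity_nonneg (fun n => (qRate_pos hq0 n).le) N hy
  rwa [le_div_iff₀ hL0, zero_mul] at h

theorem hSeries_le (hq0 : 0 < q) (hq1 : q < 1) {y : ℝ} (hy : 0 ≤ y) :
    hSeries q y ≤ (∑' n, |hCoeff q n|) * exp (-y) := by
  have hs := (summable_hCoeff hq0 hq1).abs.mul_right (exp (-y))
  rw [← tsum_mul_right]
  exact (Summable.of_norm_bounded hs fun n => norm_hCoeff_mul_exp_le hq0 hq1 n hy).tsum_le_tsum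
    (fun n => (le_abs_self _).trans (norm_hCoeff_mul_exp_le hq0 hq1 n hy)) hs

theorem continuousOn_hSeries (hq0 : 0 < q) (hq1 : q < 1) : ContinuousOn (hSeries q) (Set.Ici 0) :=
  continuousOn_tsum (fun n => by fun_prop) (summable_hCoeff hq0 hq1).abs fun n y hy =>
    (norm_hCoeff_mul_exp_le hq0 hq1 n hy).trans
      (mul_le_of_le_one_right (abs_nonneg _) (exp_le_one_iff.2 (neg_nonpos.2 hy)))

end Series

theorem integrable_exp_mul_sq_mul {g : ℝ → ℝ} {C b ε : ℝ} (hg : Continuous g)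
    (hbound : ∀ x, ‖g x‖ ≤ C * exp (-b * x ^ 2)) (hε : ε < b) :
    MeasureTheory.Integrable fun x => exp (ε * x ^ 2) * g x := by
  refine ((integrable_exp_neg_mul_sq (sub_pos.2 hε)).const_mul C).mono'
    (by fun_prop : Continuous _).aestronglyMeasurable (.of_forall fun x => ?_)
  rw [norm_mul, Real.norm_of_nonneg (exp_pos _).le]
  calc exp (ε * x ^ 2) * ‖g x‖ ≤ exp (ε * x ^ 2) * (C * exp (-b * x ^ 2)) := by
        gcongr; exact hbound x
    _ = C * exp (-(b - ε) * x ^ 2) := by rw [mul_left_comm, ← exp_add]; congr 2; ring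

theorem H_eq_mul_hSeries (r ρ x : ℝ) :
    H r ρ x = (√(2 * ρ / π) / ∏' n : ℕ, (1 - r ^ (2 * n + 1))) *
      hSeries (r ^ 2) (ρ * x ^ 2 / 2) := by
  have hrate : ∀ n : ℕ, r ^ (-(2 * (n : ℤ))) = qRate (r ^ 2) n := fun n => by
    rw [qRate, zpow_neg, zpow_mul, zpow_natCast, zpow_ofNat]
  simp only [H, hSeries, hCoeff, hrate]
  congr 2; funext n; congr 2; ring

theorem exists_H_le (r ρ : ℝ) (hr0 : 0 < r) (hr1 : r < 1) (hρ : 0 < ρ) :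
    ∃ C, 0 ≤ C ∧ ∀ x, 0 ≤ H r ρ x ∧ H r ρ x ≤ C * exp (-ρ * x ^ 2 / 2) := by
  have hq0 : 0 < r ^ 2 := by positivity
  have hq1 : r ^ 2 < 1 := pow_lt_one₀ hr0.le hr1 two_ne_zero
  have hc : 0 ≤ √(2 * ρ / π) / ∏' n : ℕ, (1 - r ^ (2 * n + 1)) :=
    div_nonneg (sqrt_nonneg _) (tprod_nonneg fun n => sub_nonneg.2 (pow_le_one₀ hr0.le hr1.le))
  refine ⟨_ * ∑' n, |hCoeff (r ^ 2) n|, mul_nonneg hc (tsum_nonneg fun n => abs_nonneg _),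
    fun x => ?_⟩
  have hy : 0 ≤ ρ * x ^ 2 / 2 := by positivity
  rw [H_eq_mul_hSeries, mul_assoc, show -ρ * x ^ 2 / 2 = -(ρ * x ^ 2 / 2) by ring]
  exact ⟨mul_nonneg hc (hSeries_nonneg hq0 hq1 hy),
    mul_le_mul_of_nonneg_left (hSeries_le hq0 hq1 hy) hc⟩

theorem continuous_H (r ρ : ℝ) (hr0 : 0 < r) (hr1 : r < 1) (hρ : 0 < ρ) : Continuous (H r ρ) := by
  have hq1 : r ^ 2 < 1 := pow_lt_one₀ hr0.le hr1 two_ne_zero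
  simp_rw [funext (H_eq_mul_hSeries r ρ)]
  exact continuous_const.mul <| (continuousOn_hSeries (by positivity) hq1).comp_continuous
    (by fun_prop) fun x => Set.mem_Ici.2 (by positivity)

theorem stmt6 (r ρ : ℝ) (hr0 : 0 < r) (hr1 : r < 1) (hρ : 0 < ρ) :
    (∃ C : ℝ, 0 ≤ C ∧ ∀ x : ℝ, 0 ≤ x →
      0 ≤ H r ρ x ∧ H r ρ x ≤ C * Real.exp (-ρ * x ^ 2 / 2)) ∧
    ∀ ε : ℝ, 0 < ε → ε < ρ / 2 →
      MeasureTheory.IntegrableOn (fun x => Real.exp (ε * x ^ 2) * H r ρ x)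
        (Set.Ioi (0 : ℝ)) := by
  obtain ⟨C, hC, hH⟩ := exists_H_le r ρ hr0 hr1 hρ
  refine ⟨⟨C, hC, fun x _ => hH x⟩, fun ε _ hε => ?_⟩
  refine (integrable_exp_mul_sq_mul (continuous_H r ρ hr0 hr1 hρ) (b := ρ / 2) (C := C)
    (fun x => ?_) hε).integrableOn
  rw [Real.norm_of_nonneg (hH x).1, show -(ρ / 2) * x ^ 2 = -ρ * x ^ 2 / 2 by ring]
  exact (hH x).2
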